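/- Set a₁ = 6, a₂ = 13, a₃ = 14, a₄ = 15, a₅ = 16, and for each i ∈ {1,…,5} let αᵢ be the least positive integer α such that α·aᵢ belongs to the additive submonoid of ℕ generated by the other four numbers {aⱼ : j ≠ i}. Then α₁ = 5 and α₂ = α₃ = α₄ = α₅ = 2; moreover 5a₁ = 2a₄, 2a₂ = 2a₁ + a₃, 2a₃ = 2a₁ + a₅, 2a₄ = a₃ + a₅, and 2a₅ = a₁ + 2a₂. -/

import Mathlib

/-- The minimal generators `a₁ = 6, a₂ = 13, a₃ = 14, a₄ = 15, a₅ = 16` of the numerical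
semigroup `H₁₂`. -/
def genH12 : Fin 5 → ℕ := ![6, 13, 14, 15, 16]

/-- `αᵢ` is the least positive integer `α` with `α·aᵢ` in the submonoid generated by the
other four generators. -/
noncomputable def alphaH12 (i : Fin 5) : ℕ :=
  sInf {n : ℕ | 0 < n ∧
    (n * genH12 i : ℕ) ∈ AddSubmonoid.closure (genH12 '' {j : Fin 5 | j ≠ i})}

/-!
Each of the five relations in the statement writes `αᵢ · aᵢ` as a sum of the other generators,
which bounds `αᵢ` from above. For the lower bounds, a sum of two numbers `≥ 13` is `≥ 26`, so
below `26` the submonoid generated by numbers `≥ 13` contains only `0` and the generators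
themselves. This rules out `6, 12, 18, 24` for `i = 1`; for `i ≥ 2`, once the multiples of
`a₁ = 6` are split off, it rules out `aᵢ ∈ [13, 16]` itself, which is not a multiple of `6`.
-/

theorem Nat.eq_zero_or_mem_of_mem_closure_of_lt_two_mul {s : Set ℕ} {c x : ℕ}
    (hs : ∀ y ∈ s, c ≤ y) (hx : x ∈ AddSubmonoid.closure s) (hlt : x < 2 * c) :
    x = 0 ∨ x ∈ s := by
  suffices x = 0 ∨ c ≤ x ∧ (x < 2 * c → x ∈ s) from this.imp_right fun h => h.2 hlt
  clear hlt
  induction hx using AddSubmonoid.closure_induction with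
  | mem y hy => exact Or.inr ⟨hs y hy, fun _ => hy⟩
  | zero => exact Or.inl rfl
  | add a b _ _ ha hb =>
    rcases ha with rfl | ha
    · simpa using hb
    rcases hb with rfl | hb
    · simpa using Or.inr ha
    obtain ⟨⟨ha, -⟩, ⟨hb, -⟩⟩ := And.intro ha hb
    exact Or.inr ⟨by omega, fun h => by omega⟩

theorem AddSubmonoid.exists_nsmul_add_of_mem_closure_insert {M : Type*} [AddCommMonoid M]
    {d x : M} {t : Set M} (hx : x ∈ AddSubmonoid.closure (insert d t)) :
    ∃ k : ℕ, ∃ y ∈ AddSubmonoid.closure t, x = k • d + y := by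
  rw [← Set.singleton_union, AddSubmonoid.closure_union, AddSubmonoid.mem_sup] at hx
  obtain ⟨_, hk, y, hy, rfl⟩ := hx
  obtain ⟨k, rfl⟩ := AddSubmonoid.mem_closure_singleton.1 hk
  exact ⟨k, y, hy, rfl⟩

theorem genH12_image_ne_zero : genH12 '' {j | j ≠ 0} = {13, 14, 15, 16} := by
  ext x
  simp [genH12, Fin.exists_fin_succ, eq_comm]

theorem genH12_image_ne {i : Fin 5} (hi : i ≠ 0) :
    genH12 '' {j | j ≠ i} = insert 6 ({13, 14, 15, 16} \ {genH12 i}) := by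
  ext x
  fin_cases i <;> simp [genH12, Fin.exists_fin_succ] at hi ⊢ <;> omega

theorem genH12_mem_closure {i j : Fin 5} (h : j ≠ i := by decide) :
    genH12 j ∈ AddSubmonoid.closure (genH12 '' {j | j ≠ i}) :=
  AddSubmonoid.subset_closure ⟨j, h, rfl⟩

theorem alphaH12_eq {i : Fin 5} {α : ℕ} (hα : 0 < α)
    (hmem : α * genH12 i ∈ AddSubmonoid.closure (genH12 '' {j | j ≠ i}))
    (hmin : ∀ m, 0 < m → m < α → m * genH12 i ∉ AddSubmonoid.closure (genH12 '' {j | j ≠ i})) :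
    alphaH12 i = α := by
  refine IsLeast.csInf_eq ⟨⟨hα, hmem⟩, fun m ⟨hm, hm_mem⟩ => ?_⟩
  exact not_lt.1 fun hlt => hmin m hm hlt hm_mem

theorem mul_genH12_zero_not_mem_closure {m : ℕ} (hm : 0 < m) (hlt : m < 5) :
    m * genH12 0 ∉ AddSubmonoid.closure (genH12 '' {j | j ≠ 0}) := by
  rw [show genH12 0 = 6 from rfl, genH12_image_ne_zero]
  intro hmem
  have := Nat.eq_zero_or_mem_of_mem_closure_of_lt_two_mul (c := 13) (by simp) hmem (by omega)
  simp only [Set.mem_insert_iff, Set.mem_singleton_iff] at this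
  omega

theorem genH12_not_mem_closure {i : Fin 5} (hi : i ≠ 0) :
    genH12 i ∉ AddSubmonoid.closure (genH12 '' {j | j ≠ i}) := by
  have hi' : 13 ≤ genH12 i ∧ genH12 i ≤ 16 := by fin_cases i <;> simp [genH12] at hi ⊢
  rw [genH12_image_ne hi]
  intro hmem
  obtain ⟨k, y, hy, hk⟩ := AddSubmonoid.exists_nsmul_add_of_mem_closure_insert hmem
  rw [smul_eq_mul] at hk
  have := Nat.eq_zero_or_mem_of_mem_closure_of_lt_two_mul (c := 13) (by simp) hy (by omega)
  simp only [Set.mem_sdiff, Set.mem_insert_iff, Set.mem_singleton_iff] at this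
  omega

theorem alphaH12_eq_two {i : Fin 5} (hi : i ≠ 0)
    (hmem : 2 * genH12 i ∈ AddSubmonoid.closure (genH12 '' {j | j ≠ i})) : alphaH12 i = 2 :=
  alphaH12_eq two_pos hmem fun m hm hlt => by
    obtain rfl : m = 1 := by omega
    simpa using genH12_not_mem_closure hi

theorem alpha_values_H12 :
    alphaH12 0 = 5 ∧ alphaH12 1 = 2 ∧ alphaH12 2 = 2 ∧ alphaH12 3 = 2 ∧ alphaH12 4 = 2 ∧
    5 * genH12 0 = 2 * genH12 3 ∧
    2 * genH12 1 = 2 * genH12 0 + genH12 2 ∧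
    2 * genH12 2 = 2 * genH12 0 + genH12 4 ∧
    2 * genH12 3 = genH12 2 + genH12 4 ∧
    2 * genH12 4 = genH12 0 + 2 * genH12 1 := by
  have r0 : 5 * genH12 0 = 2 * genH12 3 := rfl
  have r1 : 2 * genH12 1 = 2 * genH12 0 + genH12 2 := rfl
  have r2 : 2 * genH12 2 = 2 * genH12 0 + genH12 4 := rfl
  have r3 : 2 * genH12 3 = genH12 2 + genH12 4 := rfl
  have r4 : 2 * genH12 4 = genH12 0 + 2 * genH12 1 := rfl
  refine ⟨alphaH12_eq (by norm_num) ?_ fun m => mul_genH12_zero_not_mem_closure,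
    alphaH12_eq_two (by decide) ?_, alphaH12_eq_two (by decide) ?_,
    alphaH12_eq_two (by decide) ?_, alphaH12_eq_two (by decide) ?_, r0, r1, r2, r3, r4⟩
  · rw [r0]; exact nsmul_mem genH12_mem_closure 2
  · rw [r1]; exact add_mem (nsmul_mem genH12_mem_closure 2) genH12_mem_closure
  · rw [r2]; exact add_mem (nsmul_mem genH12_mem_closure 2) genH12_mem_closure
  · rw [r3]; exact add_mem genH12_mem_closure genH12_mem_closure
  · rw [r4]; exact add_mem genH12_mem_closure (nsmul_mem genH12_mem_closure 2)
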